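/- For every integer n ≥ 1 and every real number x, x·𝔠'_n(x) = ∑_{k=0}^{n−1} binom(n,k) · 𝔠_k(x) · 𝔠_{n−k}(x), where 𝔠'_n denotes the derivative of the polynomial function x ↦ 𝔠_n(x). -/

import Mathlib

open Nat Finset

/-- Central factorial numbers of the second kind. -/
noncomputable def centralT (n k : ℕ) : ℝ :=
  (1 / (k ! : ℝ)) * ∑ j ∈ Finset.range (k + 1),
    (-1 : ℝ) ^ j * (k.choose j : ℝ) * ((k : ℝ) / 2 - (j : ℝ)) ^ n

/-- Central Fubini-like polynomials. -/
noncomputable def centralFubini (n : ℕ) (x : ℝ) : ℝ :=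
  ∑ k ∈ Finset.range (n + 1), (k ! : ℝ) * centralT n k * x ^ k

/-!
The numbers `k! T(n, k)` are the exponential generating coefficients of `(e^{t/2} - e^{-t/2})^k`.
Since this series starts at `t^k`, they vanish for `k > n`, and multiplying generating functions
gives the binomial convolution `(a + b)! T(n, a + b) = ∑ C(n, i) a! T(i, a) b! T(n - i, b)`.
Comparing coefficients of `x^m`, both `x 𝔠_n'(x) + 𝔠_n(x)` and `∑_{k ≤ n} C(n, k) 𝔠_k(x) 𝔠_{n-k}(x)`
equal `(m + 1) m! T(n, m)`; the term `k = n` of the convolution is `𝔠_n 𝔠_0 = 𝔠_n`.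
-/

namespace PowerSeries

theorem rescale_exp_pow {A : Type*} [CommRing A] [Algebra ℚ A] (a : A) (m : ℕ) :
    rescale a (exp A) ^ m = rescale (m * a) (exp A) := by
  rw [← map_pow, exp_pow_eq_rescale_exp, rescale_rescale]

end PowerSeries

section GeneratingFunction

open PowerSeries

noncomputable def centralDiffEGF : ℝ⟦X⟧ :=
  rescale (1 / 2 : ℝ) (exp ℝ) - rescale (-1 / 2 : ℝ) (exp ℝ)

theorem centralDiffEGF_pow (k : ℕ) :
    centralDiffEGF ^ k = ∑ j ∈ range (k + 1),
      ((-1 : ℝ) ^ j * k.choose j) • rescale ((k : ℝ) / 2 - j) (exp ℝ) := by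
  rw [centralDiffEGF, sub_eq_neg_add, add_pow]
  refine sum_congr rfl fun j hj => ?_
  have hjk : j ≤ k := Nat.lt_succ_iff.mp (mem_range.mp hj)
  have h := exp_mul_exp_eq_exp_add (j * (-1 / 2 : ℝ)) ((k - j : ℕ) * (1 / 2))
  rw [show j * (-1 / 2 : ℝ) + (k - j : ℕ) * (1 / 2) = k / 2 - j by push_cast [hjk]; ring] at h
  rw [neg_pow, rescale_exp_pow, rescale_exp_pow, smul_eq_C_mul, map_mul, map_pow, map_neg, map_one,
    map_natCast]
  linear_combination (-1 : ℝ⟦X⟧) ^ j * (k.choose j : ℝ⟦X⟧) * h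

theorem factorial_mul_coeff_centralDiffEGF_pow (n k : ℕ) :
    n ! * coeff n (centralDiffEGF ^ k) = k ! * centralT n k := by
  simp only [centralDiffEGF_pow, map_sum, LinearMap.map_smul_of_tower, coeff_rescale, coeff_exp,
    centralT]
  have hn : (n ! : ℝ) ≠ 0 := by positivity
  have hk : (k ! : ℝ) ≠ 0 := by positivity
  rw [Finset.mul_sum, ← mul_assoc, mul_one_div_cancel hk, one_mul]
  refine sum_congr rfl fun j _ => ?_
  simp only [smul_eq_mul, map_div₀, map_one, map_natCast]
  field_simp

theorem coeff_centralDiffEGF_pow_of_lt {n k : ℕ} (h : n < k) :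
    coeff n (centralDiffEGF ^ k) = 0 := by
  have hX : X ∣ centralDiffEGF := by
    simp only [X_dvd_iff, centralDiffEGF, map_sub, ← coeff_zero_eq_constantCoeff_apply,
      coeff_rescale, pow_zero, sub_self]
  exact X_pow_dvd_iff.mp (pow_dvd_pow_of_dvd hX k) n h

theorem centralT_eq_zero_of_lt {n k : ℕ} (h : n < k) : centralT n k = 0 := by
  have := factorial_mul_coeff_centralDiffEGF_pow n k
  rw [coeff_centralDiffEGF_pow_of_lt h, mul_zero, eq_comm] at this
  exact (mul_eq_zero.mp this).resolve_left (by positivity)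

theorem factorial_mul_centralT_add (n a b : ℕ) :
    ((a + b) ! * centralT n (a + b) : ℝ) = ∑ p ∈ antidiagonal n,
      (n.choose p.1 : ℝ) * (a ! * centralT p.1 a * (b ! * centralT p.2 b)) := by
  simp only [← factorial_mul_coeff_centralDiffEGF_pow, pow_add, coeff_mul, Finset.mul_sum]
  refine sum_congr rfl fun p hp => ?_
  rw [← mem_antidiagonal.mp hp, ← Nat.add_choose_mul_factorial_mul_factorial p.1 p.2,
    ← Nat.choose_symm_add]
  push_cast
  ring

end GeneratingFunction

namespace Polynomial

theorem coeff_X_mul_derivative {R : Type*} [Semiring R] (p : R[X]) (m : ℕ) :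
    (X * derivative p).coeff m = m * p.coeff m := by
  cases m with
  | zero => simp
  | succ m => rw [coeff_X_mul, coeff_derivative, ← Nat.cast_succ, Nat.cast_comm]

end Polynomial

section CentralFubiniPoly

open Polynomial

noncomputable def centralFubiniPoly (n : ℕ) : ℝ[X] :=
  ∑ k ∈ range (n + 1), monomial k (k ! * centralT n k)

theorem eval_centralFubiniPoly (n : ℕ) (x : ℝ) :
    (centralFubiniPoly n).eval x = centralFubini n x := by
  simp [centralFubiniPoly, centralFubini, eval_finsetSum, eval_monomial]

theorem coeff_centralFubiniPoly (n m : ℕ) :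
    (centralFubiniPoly n).coeff m = m ! * centralT n m := by
  rw [centralFubiniPoly, finsetSum_coeff, sum_eq_single m]
  · exact coeff_monomial_same m _
  · intro k _ hkm
    exact coeff_monomial_of_ne _ hkm.symm
  · intro hm
    rw [centralT_eq_zero_of_lt (by simpa using hm), mul_zero, map_zero, coeff_zero]

theorem centralFubiniPoly_zero : centralFubiniPoly 0 = 1 := by
  simp [centralFubiniPoly, centralT]

theorem X_mul_derivative_add_centralFubiniPoly (n : ℕ) :
    X * derivative (centralFubiniPoly n) + centralFubiniPoly n =
      ∑ p ∈ antidiagonal n,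
        (n.choose p.1 : ℝ[X]) * (centralFubiniPoly p.1 * centralFubiniPoly p.2) := by
  ext m
  rw [coeff_add, coeff_X_mul_derivative, finsetSum_coeff, coeff_centralFubiniPoly]
  simp only [coeff_natCast_mul]
  simp only [coeff_mul, coeff_centralFubiniPoly, Finset.mul_sum]
  rw [sum_comm]
  have hslice : ∀ q ∈ antidiagonal m, ∑ p ∈ antidiagonal n, (n.choose p.1 : ℝ) *
      (q.1 ! * centralT p.1 q.1 * (q.2 ! * centralT p.2 q.2)) = m ! * centralT n m := by
    intro q hq
    rw [← mem_antidiagonal.mp hq, factorial_mul_centralT_add]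
  rw [sum_congr rfl hslice, sum_const, Nat.card_antidiagonal, nsmul_eq_mul]
  push_cast
  ring

end CentralFubiniPoly

theorem central_fubini_deriv_convolution_general (n : ℕ) (x : ℝ) :
    x * deriv (fun y : ℝ => centralFubini n y) x =
      ∑ k ∈ Finset.range n, (n.choose k : ℝ) * centralFubini k x * centralFubini (n - k) x := by
  have h := congrArg (Polynomial.eval x) (X_mul_derivative_add_centralFubiniPoly n)
  simp only [Polynomial.eval_add, Polynomial.eval_mul, Polynomial.eval_X,
    Polynomial.eval_finsetSum, Polynomial.eval_natCast, eval_centralFubiniPoly] at h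
  rw [Nat.sum_antidiagonal_eq_sum_range_succ
      (fun i j => (n.choose i : ℝ) * (centralFubini i x * centralFubini j x)),
    sum_range_succ, choose_self, Nat.sub_self, ← eval_centralFubiniPoly 0 x,
    centralFubiniPoly_zero, Polynomial.eval_one] at h
  have hf : (fun y => centralFubini n y) = fun y => (centralFubiniPoly n).eval y :=
    funext fun y => (eval_centralFubiniPoly n y).symm
  rw [hf, Polynomial.deriv]
  simp only [Nat.cast_one, one_mul, mul_one, mul_assoc] at h ⊢
  linarith

theorem central_fubini_deriv_convolution (n : ℕ) (hn : 1 ≤ n) (x : ℝ) :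
    x * deriv (fun y : ℝ => centralFubini n y) x =
      ∑ k ∈ Finset.range n, (n.choose k : ℝ) * centralFubini k x * centralFubini (n - k) x :=
  central_fubini_deriv_convolution_general n x
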